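/- arXiv:1901.01287 — 4 statements merged into one kernel-verified Lean document; each statement's English description precedes it below -/
import Mathlib

section
/- Let (r_k), (a_k), and (z_k) be sequences of non-negative real numbers such that ∑_k z_k < ∞ and r_{k+1} ≤ r_k − a_k + z_k for all k ∈ ℕ. Then the sequence (r_k) converges and ∑_k a_k < ∞. -/
/-- Let `(r_k)`, `(a_k)`, `(z_k)` be sequences of non-negative reals with `∑ z_k < ∞` and
`r_{k+1} ≤ r_k - a_k + z_k` for all `k`.  Then `(r_k)` converges and `∑ a_k < ∞`. -/
theorem quasi_fejer_convergence
    (r a z : ℕ → ℝ) (hr : ∀ k, 0 ≤ r k) (ha : ∀ k, 0 ≤ a k) (hz : ∀ k, 0 ≤ z k)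
    (hzsum : Summable z) (hrec : ∀ k, r (k + 1) ≤ r k - a k + z k) :
    (∃ l : ℝ, Filter.Tendsto r Filter.atTop (nhds l)) ∧ Summable a := by
  set T : ℕ → ℝ := fun n => ∑' k, z (k + n) with hT
  have hTnonneg : ∀ n, 0 ≤ T n := fun n =>
    tsum_nonneg (fun k => hz _)
  have hTeq : ∀ n, (∑ i ∈ Finset.range n, z i) + T n = ∑' k, z k := fun n =>
    Summable.sum_add_tsum_nat_add n hzsum
  have hTstep : ∀ n, T n = z n + T (n + 1) := by
    intro n
    have h1 := hTeq n
    have h2 := hTeq (n + 1)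
    rw [Finset.sum_range_succ] at h2
    linarith
  have hTtend : Filter.Tendsto T Filter.atTop (nhds 0) := by
    simpa [hT] using tendsto_sum_nat_add z
  set v : ℕ → ℝ := fun n => r n + T n with hv
  have hvanti : Antitone v := by
    apply antitone_nat_of_succ_le
    intro n
    have h1 := hrec n
    have h2 := hTstep n
    have h3 := ha n
    simp only [hv]
    nlinarith
  have hvbdd : BddBelow (Set.range v) := by
    refine ⟨0, ?_⟩
    rintro x ⟨n, rfl⟩
    exact add_nonneg (hr n) (hTnonneg n)
  have hl := tendsto_atTop_ciInf hvanti hvbdd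
  set l := ⨅ n, v n with hldef
  have hrl : Filter.Tendsto r Filter.atTop (nhds l) := by
    have : Filter.Tendsto (fun n => v n - T n) Filter.atTop (nhds (l - 0)) :=
      hl.sub hTtend
    simpa [hv] using this
  refine ⟨⟨l, hrl⟩, ?_⟩
  apply summable_of_sum_range_le ha (c := r 0 + ∑' k, z k)
  intro n
  have key : ∀ n, ∑ i ∈ Finset.range n, a i ≤ r 0 - r n + ∑ i ∈ Finset.range n, z i := by
    intro n
    induction n with
    | zero => simp
    | succ m ih =>
      have := hrec m
      rw [Finset.sum_range_succ, Finset.sum_range_succ]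
      linarith
  have hzle : ∑ i ∈ Finset.range n, z i ≤ ∑' k, z k :=
    Summable.sum_le_tsum _ (fun i _ => hz i) hzsum
  have := key n
  have := hr n
  linarith
end

section
/- Let (p_k) and (w_k) be sequences of non-negative real numbers such that ∑_k p_k w_k < ∞ and ∑_k p_k = +∞. Then: (i) there exists a subsequence (w_{k_j}) such that w_{k_j} ≤ 1/P_{k_j} for all j, where P_n := ∑_{k=1}^{n} p_k; in particular liminf_k w_k = 0; and (ii) if moreover there exists a constant α > 0 such that w_k − w_{k+1} ≤ α p_k for every k ∈ ℕ, then lim_k w_k = 0. -/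
open Filter Finset

/-- **(Alber et al.)** Let `(p_k)`, `(w_k)` be non-negative real sequences with
`∑ p_k w_k < ∞` and `∑ p_k = +∞` (i.e. `p` is not summable).  Then:
(i) there is a subsequence with `w_{k_j} ≤ 1 / P_{k_j}` where `P_n = ∑_{k=1}^n p_k`;
in particular `liminf w_k = 0`; and
(ii) if moreover `w_k - w_{k+1} ≤ α p_k` for some `α > 0` and all `k`, then `w_k → 0`. -/
theorem alber_lemma
    (p w : ℕ → ℝ) (hp : ∀ k, 0 ≤ p k) (hw : ∀ k, 0 ≤ w k)
    (hsum : Summable (fun k => p k * w k)) (hdiv : ¬ Summable p) :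
    ((∃ φ : ℕ → ℕ, StrictMono φ ∧
        ∀ j, w (φ j) ≤ (∑ k ∈ Finset.Icc 1 (φ j), p k)⁻¹) ∧
      Filter.liminf w Filter.atTop = 0) ∧
    (∀ α : ℝ, 0 < α → (∀ k, w k - w (k + 1) ≤ α * p k) →
      Filter.Tendsto w Filter.atTop (nhds 0)) := by
  classical
  -- Notation: R n = ∑_{k<n} p k, S n = ∑_{k=1}^n p k, A n = ∑_{k<n} p k w k, L = ∑ p k w k.
  set R : ℕ → ℝ := fun n => ∑ k ∈ Finset.range n, p k with hR_def
  set S : ℕ → ℝ := fun n => ∑ k ∈ Finset.Icc 1 n, p k with hS_def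
  set A : ℕ → ℝ := fun n => ∑ k ∈ Finset.range n, p k * w k with hA_def
  set L : ℝ := ∑' k, p k * w k with hL_def
  have hpw_nonneg : ∀ k, 0 ≤ p k * w k := fun k => mul_nonneg (hp k) (hw k)
  have hSR : ∀ n, S n = R (n + 1) - R 1 := by
    intro n
    rw [hS_def, hR_def]
    simp only
    rw [← Finset.Ico_add_one_right_eq_Icc, Finset.sum_Ico_eq_sub _ (by omega)]
  have hRmono : Monotone R := by
    intro a b hab
    exact Finset.sum_le_sum_of_subset_of_nonneg (Finset.range_subset_range.2 hab)
      (fun i _ _ => hp i)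
  have hSmono : Monotone S := by
    intro a b hab
    rw [hSR, hSR]
    have := hRmono (by omega : a + 1 ≤ b + 1)
    linarith
  have hS0 : ∀ n, 0 ≤ S n := fun n => Finset.sum_nonneg fun i _ => hp i
  have hRtop : Tendsto R atTop atTop :=
    (not_summable_iff_tendsto_nat_atTop_of_nonneg hp).1 hdiv
  have hStop : Tendsto S atTop atTop := by
    have h1 : Tendsto (fun n => R (n + 1)) atTop atTop :=
      hRtop.comp (tendsto_add_atTop_nat 1)
    have h2 : Tendsto (fun n => R (n + 1) - R 1) atTop atTop :=
      tendsto_atTop_add_const_right _ (-R 1) h1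
    refine h2.congr fun n => ?_
    rw [hSR]
  have hAL : ∀ n, A n ≤ L := fun n =>
    Summable.sum_le_tsum (Finset.range n) (fun i _ => hpw_nonneg i) hsum
  have hAt : Tendsto A atTop (nhds L) := hsum.hasSum.tendsto_sum_nat
  have hAmono : Monotone A := by
    intro a b hab
    exact Finset.sum_le_sum_of_subset_of_nonneg (Finset.range_subset_range.2 hab)
      (fun i _ _ => hpw_nonneg i)
  -- Key fact: beyond any N, and any threshold C, there is k with S k ≥ max C 1 and
  -- w k ≤ (S k)⁻¹.
  have key : ∀ C : ℝ, ∀ N : ℕ, ∃ k, N ≤ k ∧ C ≤ S k ∧ 1 ≤ S k ∧ w k ≤ (S k)⁻¹ := by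
    intro C N
    by_contra hcon
    push_neg at hcon
    obtain ⟨M, hM⟩ := (hStop.eventually_ge_atTop (max C 1)).exists_forall_of_atTop
    obtain ⟨N', hN'ge, hN'A⟩ :
        ∃ N', max N M ≤ N' ∧ L - 1/2 < A N' :=
      ((eventually_ge_atTop (max N M)).and
        (hAt.eventually (eventually_gt_nhds (by linarith : L - 1/2 < L)))).exists
    obtain ⟨n, hnN', hnS⟩ : ∃ n, N' ≤ n ∧ 2 * S N' + 1 ≤ S n :=
      ((eventually_ge_atTop N').and (hStop.eventually_ge_atTop (2 * S N' + 1))).exists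
    have hSn_pos : (0:ℝ) < S n := by
      have := hM n (le_trans (le_trans (le_max_right N M) hN'ge) hnN')
      have := le_max_right C 1
      linarith [le_trans (le_max_right C 1) (hM n (le_trans (le_trans (le_max_right N M) hN'ge) hnN'))]
    -- every k in (N', n] satisfies (S n)⁻¹ < w k
    have hterm : ∀ k ∈ Finset.Ico (N' + 1) (n + 1), p k * (S n)⁻¹ ≤ p k * w k := by
      intro k hk
      rw [Finset.mem_Ico] at hk
      have hkM : M ≤ k := by
        have := le_trans (le_max_right N M) hN'ge; omega
      have hkN : N ≤ k := by
        have := le_trans (le_max_left N M) hN'ge; omega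
      have hSk1 : (1:ℝ) ≤ S k := le_trans (le_max_right C 1) (hM k hkM)
      have hSkC : C ≤ S k := le_trans (le_max_left C 1) (hM k hkM)
      have hwk : (S k)⁻¹ < w k := hcon k hkN hSkC hSk1
      have hSkn : S k ≤ S n := hSmono (by omega)
      have : (S n)⁻¹ ≤ (S k)⁻¹ := by
        apply inv_anti₀ (by linarith) hSkn
      exact mul_le_mul_of_nonneg_left (le_trans this hwk.le) (hp k)
    have hsum_eq : ∑ k ∈ Finset.Ico (N' + 1) (n + 1), p k = S n - S N' := by
      rw [Finset.sum_Ico_eq_sub _ (by omega : N' + 1 ≤ n + 1), hSR, hSR]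
      ring_nf
      rfl
    have hsum_ge : (S n - S N') * (S n)⁻¹ ≤ ∑ k ∈ Finset.Ico (N' + 1) (n + 1), p k * w k := by
      calc (S n - S N') * (S n)⁻¹
          = ∑ k ∈ Finset.Ico (N' + 1) (n + 1), p k * (S n)⁻¹ := by
            rw [← Finset.sum_mul, hsum_eq]
        _ ≤ ∑ k ∈ Finset.Ico (N' + 1) (n + 1), p k * w k := Finset.sum_le_sum hterm
    have hsum_le : ∑ k ∈ Finset.Ico (N' + 1) (n + 1), p k * w k ≤ L - A N' := by
      rw [Finset.sum_Ico_eq_sub _ (by omega : N' + 1 ≤ n + 1)]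
      have h1 : A N' ≤ A (N' + 1) := hAmono (by omega)
      have h2 : (∑ k ∈ Finset.range (n+1), p k * w k) ≤ L := hAL (n+1)
      have h3 : (∑ k ∈ Finset.range (N'+1), p k * w k) = A (N' + 1) := rfl
      simp only [hA_def] at h1 ⊢
      linarith
    have hhalf : (1:ℝ)/2 ≤ (S n - S N') * (S n)⁻¹ := by
      have hSN'_nonneg : 0 ≤ S N' := hS0 N'
      have h2 : S n / 2 ≤ S n - S N' := by linarith
      calc (1:ℝ)/2 = (S n / 2) * (S n)⁻¹ := by field_simp
        _ ≤ (S n - S N') * (S n)⁻¹ :=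
            mul_le_mul_of_nonneg_right h2 (inv_nonneg.2 hSn_pos.le)
    linarith
  -- Part (i): the subsequence
  have hfreq : ∃ᶠ k in atTop, w k ≤ (S k)⁻¹ := by
    rw [Filter.frequently_atTop]
    intro N
    obtain ⟨k, hk1, _, _, hk4⟩ := key 1 N
    exact ⟨k, hk1, hk4⟩
  obtain ⟨φ, hφmono, hφ⟩ := Filter.extraction_of_frequently_atTop hfreq
  -- liminf = 0
  have hbdd : IsBoundedUnder (· ≥ ·) atTop w :=
    ⟨0, Filter.eventually_map.2 (Eventually.of_forall hw)⟩
  have hfreq1 : ∃ᶠ k in atTop, w k ≤ 1 := by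
    rw [Filter.frequently_atTop]
    intro N
    obtain ⟨k, hk1, _, hk3, hk4⟩ := key 1 N
    exact ⟨k, hk1, le_trans hk4 (by
      rw [inv_le_one_iff₀]; right; exact hk3)⟩
  have hcobdd : IsCoboundedUnder (· ≥ ·) atTop w :=
    Filter.IsCoboundedUnder.of_frequently_le hfreq1
  have hliminf_ge : 0 ≤ Filter.liminf w Filter.atTop :=
    Filter.le_liminf_of_le hcobdd (Eventually.of_forall hw)
  have hliminf_le : Filter.liminf w Filter.atTop ≤ 0 := by
    have : ∀ ε : ℝ, 0 < ε → Filter.liminf w Filter.atTop ≤ 0 + ε := by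
      intro ε hε
      rw [zero_add]
      apply Filter.liminf_le_of_frequently_le _ hbdd
      rw [Filter.frequently_atTop]
      intro N
      obtain ⟨k, hk1, hk2, hk3, hk4⟩ := key ε⁻¹ N
      refine ⟨k, hk1, le_trans hk4 ?_⟩
      have hSk_pos : 0 < S k := by linarith
      calc (S k)⁻¹ ≤ (ε⁻¹)⁻¹ := by
            apply inv_anti₀ (inv_pos.2 hε) hk2
        _ = ε := inv_inv ε
    exact le_of_forall_pos_le_add this
  refine ⟨⟨⟨φ, hφmono, fun j => ?_⟩, le_antisymm hliminf_le hliminf_ge⟩, ?_⟩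
  · exact hφ j
  -- Part (ii)
  intro α hα hrec
  have main : ∀ ε : ℝ, 0 < ε → ∃ K : ℕ, ∀ m, K ≤ m → w m < ε := by
    intro ε hε
    set δ : ℝ := ε * ε / (4 * α) with hδ_def
    have hδpos : 0 < δ := by positivity
    obtain ⟨K, hK⟩ : ∃ K, L - δ < A K :=
      (hAt.eventually (eventually_gt_nhds (by linarith : L - δ < L))).exists
    refine ⟨K, fun m hm => ?_⟩
    by_contra hcon
    push_neg at hcon
    -- find n₀ ≥ m with w n₀ ≤ ε/2
    obtain ⟨n₀, hn₀m, hn₀C, hn₀1, hn₀w⟩ := key (2/ε) m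
    have hwn₀ : w n₀ ≤ ε / 2 := by
      refine le_trans hn₀w ?_
      have h2ε : (0:ℝ) < 2/ε := by positivity
      calc (S n₀)⁻¹ ≤ (2/ε)⁻¹ := inv_anti₀ h2ε hn₀C
        _ = ε / 2 := by rw [inv_div]
    have hex : ∃ j, m ≤ j ∧ w j ≤ ε / 2 := ⟨n₀, hn₀m, hwn₀⟩
    set n : ℕ := Nat.find hex with hn_def
    obtain ⟨hmn, hwn⟩ : m ≤ n ∧ w n ≤ ε / 2 := Nat.find_spec hex
    have hmin : ∀ j, m ≤ j → j < n → ε / 2 < w j := by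
      intro j hj1 hj2
      have := Nat.find_min hex hj2
      push_neg at this
      exact this hj1
    have hmltn : m < n := by
      rcases lt_or_eq_of_le hmn with h | h
      · exact h
      · exfalso; rw [← h] at hwn; linarith
    -- telescoping
    have htel : w m - w n = ∑ j ∈ Finset.Ico m n, (w j - w (j + 1)) := by
      rw [Finset.sum_Ico_eq_sub _ hmn, Finset.sum_range_sub' w, Finset.sum_range_sub' w]
      ring
    have h1 : w m - w n ≤ α * ∑ j ∈ Finset.Ico m n, p j := by
      rw [htel, Finset.mul_sum]
      exact Finset.sum_le_sum fun j _ => hrec j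
    have h2 : ε / 2 ≤ w m - w n := by linarith
    have hsump : ε / (2 * α) ≤ ∑ j ∈ Finset.Ico m n, p j := by
      rw [div_le_iff₀ (by positivity)]
      nlinarith [le_trans h2 h1]
    have h3 : δ ≤ ∑ j ∈ Finset.Ico m n, p j * w j := by
      calc δ = (ε / 2) * (ε / (2 * α)) := by
            rw [hδ_def]; field_simp; ring
        _ ≤ (ε / 2) * ∑ j ∈ Finset.Ico m n, p j :=
            mul_le_mul_of_nonneg_left hsump (by positivity)
        _ = ∑ j ∈ Finset.Ico m n, (ε / 2) * p j := Finset.mul_sum _ _ _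
        _ ≤ ∑ j ∈ Finset.Ico m n, p j * w j := by
            refine Finset.sum_le_sum fun j hj => ?_
            rw [Finset.mem_Ico] at hj
            rw [mul_comm]
            exact mul_le_mul_of_nonneg_left (hmin j hj.1 hj.2).le (hp j)
    have h4 : ∑ j ∈ Finset.Ico m n, p j * w j ≤ ∑ j ∈ Finset.Ico K n, p j * w j :=
      Finset.sum_le_sum_of_subset_of_nonneg
        (Finset.Ico_subset_Ico hm le_rfl) (fun i _ _ => hpw_nonneg i)
    have h5 : ∑ j ∈ Finset.Ico K n, p j * w j = A n - A K :=
      Finset.sum_Ico_eq_sub _ (le_trans hm hmn)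
    have h6 : A n ≤ L := hAL n
    rw [h5] at h4
    linarith
  rw [Metric.tendsto_atTop]
  intro ε hε
  obtain ⟨K, hK⟩ := main ε hε
  refine ⟨K, fun n hn => ?_⟩
  rw [Real.dist_eq, sub_zero, abs_of_nonneg (hw n)]
  exact hK n hn
end

section
/- Let H_p, H_d, H_v be real Hilbert spaces, T : H_p → H_v and A : H_p → H_d bounded linear operators, b ∈ H_d, μ ∈ H_d, β > 0, ρ ≥ 0, and g ∈ Γ₀(H_v). Let C ⊆ H_p and suppose the pair (f, C) is (F, ζ)-smooth with curvature constant K := K_{(F,ζ,C)} < ∞. Define E(x) := f(x) + g^β(Tx) + ⟨μ, Ax − b⟩ + (ρ/2)‖Ax − b‖² and L := ‖T‖²/β + ‖A‖²ρ. Then for every x, s ∈ C and every γ ∈ (0,1], the point x⁺ := x + γ(s − x) satisfies E(x⁺) ≤ E(x) + ⟨∇_x E(x), x⁺ − x⟩ + K·ζ(γ) + (L/2)‖x⁺ − x‖². -/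
open RealInnerProductSpace Set

/-- `g ∈ Γ₀(H)` encoded with `EReal` values. -/
def IsProperConvexLsc {H : Type*} [NormedAddCommGroup H] [InnerProductSpace ℝ H]
    (g : H → EReal) : Prop :=
  (∃ x, g x ≠ ⊤) ∧ (∀ x, g x ≠ ⊥) ∧
    (∀ x y : H, ∀ a b : ℝ, 0 ≤ a → 0 ≤ b → a + b = 1 →
      g (a • x + b • y) ≤ (a : EReal) * g x + (b : EReal) * g y) ∧
    LowerSemicontinuous g

/-- The Moreau envelope `g^β(x) = inf_y { g(y) + 1/(2β) ‖x - y‖² }`. -/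
noncomputable def moreauEnv {H : Type*} [NormedAddCommGroup H] [InnerProductSpace ℝ H]
    (g : H → EReal) (β : ℝ) (x : H) : EReal :=
  ⨅ y : H, g y + (((2 * β)⁻¹ * ‖x - y‖ ^ 2 : ℝ) : EReal)

/-- The smoothed augmented-Lagrangian functional
`E(x) = f(x) + g^β(Tx) + ⟪μ, Ax - b⟫ + (ρ/2)‖Ax - b‖²`. -/
noncomputable def Efun {Hp Hd Hv : Type*}
    [NormedAddCommGroup Hp] [InnerProductSpace ℝ Hp]
    [NormedAddCommGroup Hd] [InnerProductSpace ℝ Hd]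
    [NormedAddCommGroup Hv] [InnerProductSpace ℝ Hv]
    (f : Hp → ℝ) (g : Hv → EReal) (β : ℝ) (T : Hp →L[ℝ] Hv) (A : Hp →L[ℝ] Hd)
    (b μ : Hd) (ρ : ℝ) (x : Hp) : ℝ :=
  f x + (moreauEnv g β (T x)).toReal + ⟪μ, A x - b⟫ + ρ / 2 * ‖A x - b‖ ^ 2

section AuxLemmas


private lemma le_of_forall_pos_le_add' {a b : ℝ} (h : ∀ ε : ℝ, 0 < ε → a ≤ b + ε) : a ≤ b := by
  by_contra hc
  push_neg at hc
  have := h ((a - b)/2) (by linarith)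
  linarith

section Aux
variable {H : Type*} [NormedAddCommGroup H] [InnerProductSpace ℝ H]


variable [CompleteSpace H]

private lemma HasGradientAt.sub'' {f g : H → ℝ} {a c : H} {x : H}
    (hf : HasGradientAt f a x) (hg : HasGradientAt g c x) :
    HasGradientAt (fun y => f y - g y) (a - c) x := by
  rw [hasGradientAt_iff_hasFDerivAt] at *
  rw [map_sub]
  exact hf.sub hg

private lemma hasGradientAt_const_mul_norm_sq (c : ℝ) (x : H) :
    HasGradientAt (fun v : H => c / 2 * ‖v‖ ^ 2) (c • x) x := by
  have h1 : HasFDerivAt (fun v : H => ⟪v, v⟫)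
      ((fderivInnerCLM ℝ (x, x)).comp ((ContinuousLinearMap.id ℝ H).prod
        (ContinuousLinearMap.id ℝ H))) x :=
    (hasFDerivAt_id x).inner ℝ (hasFDerivAt_id x)
  have h2 : HasFDerivAt (fun v : H => c / 2 * ‖v‖ ^ 2)
      ((c/2) • ((fderivInnerCLM ℝ (x, x)).comp ((ContinuousLinearMap.id ℝ H).prod
        (ContinuousLinearMap.id ℝ H)))) x := by
    have : (fun v : H => c / 2 * ‖v‖ ^ 2) = fun v : H => c / 2 * ⟪v, v⟫ := by
      funext v; rw [real_inner_self_eq_norm_sq]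
    rw [this]
    exact h1.const_mul (c/2)
  rw [hasGradientAt_iff_hasFDerivAt]
  refine h2.congr_fderiv ?_
  symm
  apply ContinuousLinearMap.ext
  intro v
  simp [InnerProductSpace.toDual_apply_apply, fderivInnerCLM, real_inner_smul_left]
  rw [real_inner_comm]
  ring

private lemma grad_ineq {s : Set H} {φ : H → ℝ} (hφ : ConvexOn ℝ s φ) {x y : H}
    (hx : x ∈ s) (hy : y ∈ s) {φ' : H} (hd : HasGradientAt φ φ' x) :
    φ x + ⟪φ', y - x⟫ ≤ φ y := by
  have hmap : ∀ t : ℝ, t ∈ Icc (0:ℝ) 1 → x + t • (y - x) ∈ s := fun t ht =>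
    hφ.1.add_smul_sub_mem hx hy ht
  have e : ∀ t : ℝ, (AffineMap.lineMap x y) t = x + t • (y - x) := fun t => by
    rw [AffineMap.lineMap_apply_module]; module
  have hconvh : ConvexOn ℝ (Icc (0:ℝ) 1) (fun t : ℝ => φ (x + t • (y - x))) := by
    have h0 := hφ.comp_affineMap (AffineMap.lineMap x y)
    have h1 : ConvexOn ℝ (Icc (0:ℝ) 1) (φ ∘ (AffineMap.lineMap x y)) :=
      h0.subset (fun t ht => by
        simp only [Set.mem_preimage, e]
        exact hmap t ht) (convex_Icc 0 1)
    have heq : (φ ∘ (AffineMap.lineMap x y)) = fun t : ℝ => φ (x + t • (y - x)) := by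
      funext t; simp only [Function.comp_apply, e]
    rwa [heq] at h1
  have hline : HasDerivAt (fun t : ℝ => x + t • (y - x)) (y - x) 0 := by
    simpa using ((hasDerivAt_id (0:ℝ)).smul_const (y - x)).const_add x
  have hderiv : HasDerivAt (fun t : ℝ => φ (x + t • (y - x))) ⟪φ', y - x⟫ 0 := by
    have hF := hasGradientAt_iff_hasFDerivAt.mp hd
    have hF' : HasFDerivAt φ ((InnerProductSpace.toDual ℝ H) φ')
        ((fun t : ℝ => x + t • (y - x)) 0) := by simpa using hF
    have := hF'.comp_hasDerivAt (0:ℝ) hline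
    have h := this
    simp [InnerProductSpace.toDual_apply_apply] at h
    exact h
  have hs := hconvh.le_slope_of_hasDerivAt (by simp : (0:ℝ) ∈ Icc (0:ℝ) 1)
    (by simp : (1:ℝ) ∈ Icc (0:ℝ) 1) zero_lt_one hderiv
  simp only [slope_def_field, div_one] at hs
  have h0 : x + (0:ℝ) • (y - x) = x := by simp
  have h1 : x + (1:ℝ) • (y - x) = y := by simp
  rw [h0, h1] at hs
  simp only [slope, vsub_eq_sub, sub_zero, div_one] at hs
  linarith

end Aux
section MoreauAux
variable {H : Type*} [NormedAddCommGroup H] [InnerProductSpace ℝ H]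

private lemma exists_affine_minorant {g : H → EReal} (hg : IsProperConvexLsc g) :
    ∃ (l : H →L[ℝ] ℝ) (c : ℝ), ∀ z, ((l z + c : ℝ) : EReal) ≤ g z := by
  obtain ⟨⟨x₀, hx₀⟩, hbot, hconv, hlsc⟩ := hg
  set S : Set (H × ℝ) := {p | g p.1 ≤ (p.2 : EReal)} with hS
  have hSclosed : IsClosed S := by
    have h1 : IsClosed {q : H × EReal | g q.1 ≤ q.2} := hlsc.isClosed_epigraph
    have : S = (fun p : H × ℝ => ((p.1, (p.2 : EReal)) : H × EReal)) ⁻¹'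
        {q : H × EReal | g q.1 ≤ q.2} := rfl
    rw [this]
    exact h1.preimage (continuous_fst.prodMk (continuous_coe_real_ereal.comp continuous_snd))
  have hSconv : Convex ℝ S := by
    rintro ⟨z₁, t₁⟩ h₁ ⟨z₂, t₂⟩ h₂ a b ha hb hab
    simp only [hS, Set.mem_setOf_eq] at h₁ h₂ ⊢
    have hne₁ : g z₁ ≠ ⊤ := (h₁.trans_lt (EReal.coe_lt_top t₁)).ne
    have hne₂ : g z₂ ≠ ⊤ := (h₂.trans_lt (EReal.coe_lt_top t₂)).ne
    have e₁ : g z₁ = ((g z₁).toReal : EReal) := (EReal.coe_toReal hne₁ (hbot z₁)).symm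
    have e₂ : g z₂ = ((g z₂).toReal : EReal) := (EReal.coe_toReal hne₂ (hbot z₂)).symm
    have hr₁ : (g z₁).toReal ≤ t₁ := by rw [e₁] at h₁; exact EReal.coe_le_coe_iff.mp h₁
    have hr₂ : (g z₂).toReal ≤ t₂ := by rw [e₂] at h₂; exact EReal.coe_le_coe_iff.mp h₂
    show g (a • z₁ + b • z₂) ≤ (((a • (z₁, t₁) + b • (z₂, t₂) : H × ℝ).2 : ℝ) : EReal)
    have hsnd : (a • (z₁, t₁) + b • (z₂, t₂) : H × ℝ).2 = a * t₁ + b * t₂ := rfl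
    rw [hsnd]
    calc g (a • z₁ + b • z₂) ≤ (a : EReal) * g z₁ + (b : EReal) * g z₂ :=
          hconv z₁ z₂ a b ha hb hab
      _ = ((a * (g z₁).toReal + b * (g z₂).toReal : ℝ) : EReal) := by
          conv_lhs => rw [e₁, e₂]
          rw [← EReal.coe_mul, ← EReal.coe_mul, ← EReal.coe_add]
      _ ≤ ((a * t₁ + b * t₂ : ℝ) : EReal) := by
          apply EReal.coe_le_coe_iff.mpr
          exact add_le_add (mul_le_mul_of_nonneg_left hr₁ ha)
            (mul_le_mul_of_nonneg_left hr₂ hb)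
  set r₀ : ℝ := (g x₀).toReal with hr₀
  have e₀ : g x₀ = (r₀ : EReal) := (EReal.coe_toReal hx₀ (hbot x₀)).symm
  have hp₀ : ((x₀, r₀ - 1) : H × ℝ) ∉ S := by
    simp only [hS, Set.mem_setOf_eq, e₀, EReal.coe_le_coe_iff]
    push_neg
    linarith
  obtain ⟨φ, u, hφS, hφp⟩ := geometric_hahn_banach_closed_point hSconv hSclosed hp₀
  set α : ℝ := φ ((0 : H), (1 : ℝ)) with hα
  have hdecomp : ∀ (z : H) (t : ℝ), φ (z, t) = φ (z, 0) + t * α := by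
    intro z t
    have : ((z, t) : H × ℝ) = (z, 0) + t • ((0 : H), (1 : ℝ)) := by
      simp [Prod.ext_iff]
    rw [this, map_add, map_smul]
    simp [hα, smul_eq_mul]
  have hmemS : ∀ n : ℕ, ((x₀, r₀ + n) : H × ℝ) ∈ S := by
    intro n
    simp only [hS, Set.mem_setOf_eq, e₀, EReal.coe_le_coe_iff]
    exact le_add_of_nonneg_right (Nat.cast_nonneg n)
  have hαneg : α < 0 := by
    rcases lt_trichotomy α 0 with h | h | h
    · exact h
    · exfalso
      have h1 := hφS _ (hmemS 0)
      have h2 := hφp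
      rw [hdecomp x₀ (r₀ + (0:ℕ)), h] at h1
      rw [hdecomp x₀ (r₀ - 1), h] at h2
      simp at h1 h2
      linarith
    · exfalso
      obtain ⟨n, hn⟩ := exists_nat_gt ((u - φ (x₀, 0) - r₀ * α) / α)
      have h1 := hφS _ (hmemS n)
      rw [hdecomp x₀ (r₀ + n)] at h1
      have : (u - φ (x₀, 0) - r₀ * α) / α * α < n * α :=
        mul_lt_mul_of_pos_right hn h
      rw [div_mul_cancel₀ _ (ne_of_gt h)] at this
      nlinarith
  refine ⟨(-α⁻¹) • (φ.comp (ContinuousLinearMap.inl ℝ H ℝ)), u / α, ?_⟩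
  intro z
  by_cases hz : g z = ⊤
  · rw [hz]; exact le_top
  · have ez : g z = ((g z).toReal : EReal) := (EReal.coe_toReal hz (hbot z)).symm
    set r : ℝ := (g z).toReal
    have hmem : ((z, r) : H × ℝ) ∈ S := by
      simp only [hS, Set.mem_setOf_eq, ez]
      exact le_rfl
    have h1 := hφS _ hmem
    rw [hdecomp z r] at h1
    rw [ez]
    apply EReal.coe_le_coe_iff.mpr
    simp only [ContinuousLinearMap.smul_apply, ContinuousLinearMap.comp_apply,
      ContinuousLinearMap.inl_apply, smul_eq_mul]
    -- h1 : φ (z, 0) + r * α < u, α < 0 ⊢ -α⁻¹ * φ (z,0) + u / α ≤ r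
    have hα' : α⁻¹ < 0 := inv_neg''.mpr hαneg
    have h2 : r * α < u - φ (z, 0) := by linarith
    have h3 : (u - φ (z, 0)) * α⁻¹ < r * α * α⁻¹ := by
      exact mul_lt_mul_of_neg_right h2 hα'
    rw [mul_assoc, mul_inv_cancel₀ (ne_of_lt hαneg), mul_one] at h3
    have : (u - φ (z, 0)) * α⁻¹ = -α⁻¹ * φ (z, 0) + u / α := by
      field_simp; ring
    linarith [h3, this.symm.le]

end MoreauAux

section MoreauAux2
variable {H : Type*} [NormedAddCommGroup H] [InnerProductSpace ℝ H]
variable {g : H → EReal} {β : ℝ}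

private lemma moreau_ne_top (hg : IsProperConvexLsc g) (y : H) :
    moreauEnv g β y ≠ ⊤ := by
  obtain ⟨⟨x₀, hx₀⟩, hbot, -, -⟩ := hg
  have h1 : moreauEnv g β y ≤ g x₀ + (((2 * β)⁻¹ * ‖y - x₀‖ ^ 2 : ℝ) : EReal) :=
    iInf_le _ x₀
  exact ne_top_of_le_ne_top (EReal.add_lt_top hx₀ (EReal.coe_ne_top _)).ne h1

private lemma moreau_ne_bot (hg : IsProperConvexLsc g) (hβ : 0 < β) (y : H) :
    moreauEnv g β y ≠ ⊥ := by
  obtain ⟨l, c, hl⟩ := exists_affine_minorant hg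
  set cβ : ℝ := (2 * β)⁻¹ with hcβ
  have hcβpos : 0 < cβ := by positivity
  set B : ℝ := l y + c - ‖l‖ ^ 2 / (4 * cβ) with hB
  have hbound : ∀ z : H, ((B : ℝ) : EReal) ≤ g z + ((cβ * ‖y - z‖ ^ 2 : ℝ) : EReal) := by
    intro z
    have hreal : B ≤ l z + c + cβ * ‖y - z‖ ^ 2 := by
      have h1 : l y - l z ≤ ‖l‖ * ‖y - z‖ := by
        have := l.le_opNorm (y - z)
        rw [map_sub] at this
        calc l y - l z ≤ |l y - l z| := le_abs_self _
          _ = ‖l y - l z‖ := (Real.norm_eq_abs _).symm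
          _ ≤ ‖l‖ * ‖y - z‖ := this
      have h4 : (0:ℝ) < 4 * cβ := by positivity
      have hq : 4 * cβ * (‖l‖ * ‖y - z‖) ≤ ‖l‖ ^ 2 + 4 * cβ ^ 2 * ‖y - z‖ ^ 2 := by
        nlinarith [sq_nonneg (‖l‖ - 2 * cβ * ‖y - z‖)]
      have key : ‖l‖ * ‖y - z‖ ≤ ‖l‖ ^ 2 / (4 * cβ) + cβ * ‖y - z‖ ^ 2 := by
        calc ‖l‖ * ‖y - z‖ = 4 * cβ * (‖l‖ * ‖y - z‖) / (4 * cβ) := by field_simp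
          _ ≤ (‖l‖ ^ 2 + 4 * cβ ^ 2 * ‖y - z‖ ^ 2) / (4 * cβ) := by gcongr
          _ = ‖l‖ ^ 2 / (4 * cβ) + cβ * ‖y - z‖ ^ 2 := by field_simp
      simp only [hB]
      linarith [h1, key]
    calc ((B : ℝ) : EReal) ≤ ((l z + c + cβ * ‖y - z‖ ^ 2 : ℝ) : EReal) :=
          EReal.coe_le_coe_iff.mpr hreal
      _ = ((l z + c : ℝ) : EReal) + ((cβ * ‖y - z‖ ^ 2 : ℝ) : EReal) := by
          rw [← EReal.coe_add]
      _ ≤ g z + ((cβ * ‖y - z‖ ^ 2 : ℝ) : EReal) := add_le_add (hl z) le_rfl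
  have : ((B : ℝ) : EReal) ≤ moreauEnv g β y := le_iInf hbound
  intro hcon
  rw [hcon] at this
  exact (EReal.coe_ne_bot B) (le_bot_iff.mp this)

private lemma moreau_toReal_le (hg : IsProperConvexLsc g) (hβ : 0 < β) (y z : H)
    (hz : g z ≠ ⊤) :
    (moreauEnv g β y).toReal ≤ (g z).toReal + (2 * β)⁻¹ * ‖y - z‖ ^ 2 := by
  have h1 : moreauEnv g β y ≤ g z + (((2 * β)⁻¹ * ‖y - z‖ ^ 2 : ℝ) : EReal) := iInf_le _ z
  have h2 := EReal.toReal_le_toReal h1 (moreau_ne_bot hg hβ y)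
    (EReal.add_lt_top hz (EReal.coe_ne_top _)).ne
  rwa [EReal.toReal_add hz (hg.2.1 z) (EReal.coe_ne_top _) (EReal.coe_ne_bot _),
    EReal.toReal_coe] at h2

private lemma convexOn_sq_sub_moreau (hg : IsProperConvexLsc g) (hβ : 0 < β) :
    ConvexOn ℝ Set.univ (fun y : H => (2 * β)⁻¹ * ‖y‖ ^ 2 - (moreauEnv g β y).toReal) := by
  set cβ : ℝ := (2 * β)⁻¹ with hcβ
  refine ⟨convex_univ, ?_⟩
  intro y₁ _ y₂ _ a b ha hb hab
  set y : H := a • y₁ + b • y₂ with hy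
  simp only [smul_eq_mul]
  apply le_of_forall_pos_le_add'
  intro ε hε
  have hfin_top : moreauEnv g β y ≠ ⊤ := moreau_ne_top hg y
  have hfin_bot : moreauEnv g β y ≠ ⊥ := moreau_ne_bot hg hβ y
  set m : ℝ := (moreauEnv g β y).toReal with hm
  have em : moreauEnv g β y = (m : EReal) := (EReal.coe_toReal hfin_top hfin_bot).symm
  have hlt : moreauEnv g β y < ((m + ε : ℝ) : EReal) := by
    rw [em]
    exact_mod_cast EReal.coe_lt_coe_iff.mpr (by linarith)
  have hlt2 : (⨅ z : H, g z + ((cβ * ‖y - z‖ ^ 2 : ℝ) : EReal)) < ((m + ε : ℝ) : EReal) := hlt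
  obtain ⟨z, hz⟩ := iInf_lt_iff.mp hlt2
  have hgz_top : g z ≠ ⊤ := by
    intro hcon
    rw [hcon, EReal.top_add_coe] at hz
    exact not_top_lt hz
  have hgz_bot : g z ≠ ⊥ := hg.2.1 z
  set r : ℝ := (g z).toReal with hr
  have ez : g z = (r : EReal) := (EReal.coe_toReal hgz_top hgz_bot).symm
  have hzr : r + cβ * ‖y - z‖ ^ 2 < m + ε := by
    rw [ez, ← EReal.coe_add] at hz
    exact EReal.coe_lt_coe_iff.mp hz
  have h₁ : (moreauEnv g β y₁).toReal ≤ r + cβ * ‖y₁ - z‖ ^ 2 := moreau_toReal_le hg hβ y₁ z hgz_top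
  have h₂ : (moreauEnv g β y₂).toReal ≤ r + cβ * ‖y₂ - z‖ ^ 2 := moreau_toReal_le hg hβ y₂ z hgz_top
  have e : ∀ v : H, ‖v - z‖ ^ 2 = ‖v‖ ^ 2 - 2 * ⟪v, z⟫ + ‖z‖ ^ 2 := fun v => norm_sub_sq_real v z
  have einner : ⟪y, z⟫ = a * ⟪y₁, z⟫ + b * ⟪y₂, z⟫ := by
    simp [hy, inner_add_left, real_inner_smul_left]
  rw [e] at hzr
  rw [e] at h₁ h₂
  have ha₁ := mul_le_mul_of_nonneg_left h₁ ha
  have hb₂ := mul_le_mul_of_nonneg_left h₂ hb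
  have hz2 : a * ‖z‖ ^ 2 + b * ‖z‖ ^ 2 = ‖z‖ ^ 2 := by rw [← add_mul, hab, one_mul]
  have hr2 : a * r + b * r = r := by rw [← mul_comm r a, ← mul_comm r b, ← mul_add, hab, mul_one]
  -- goal: cβ * ‖y‖^2 - m ≤ a * (cβ * ‖y₁‖^2 - m̃y₁) + b * (cβ * ‖y₂‖^2 - m̃y₂) + ε
  have hyn : cβ * ‖y‖ ^ 2 - m ≤ cβ * (2 * ⟪y, z⟫ - ‖z‖ ^ 2) - r + ε := by nlinarith
  rw [einner] at hyn
  have hczz : cβ * (a * ‖z‖ ^ 2) + cβ * (b * ‖z‖ ^ 2) = cβ * ‖z‖ ^ 2 := by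
    rw [← mul_add, hz2]
  linarith [ha₁, hb₂, hyn, hr2, hczz]

end MoreauAux2


private lemma norm_combo_sq' {H : Type*} [NormedAddCommGroup H] [InnerProductSpace ℝ H]
    {a b : ℝ} (hab : a + b = 1) (u w : H) :
    ‖a • u + b • w‖ ^ 2 = a * ‖u‖ ^ 2 + b * ‖w‖ ^ 2 - a * b * ‖u - w‖ ^ 2 := by
  have h : ∀ v : H, ‖v‖ ^ 2 = ⟪v, v⟫ := fun v => (real_inner_self_eq_norm_sq v).symm
  rw [h, h, h, h]
  simp only [inner_add_left, inner_add_right, inner_sub_left, inner_sub_right,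
    real_inner_smul_left, real_inner_smul_right]
  rw [real_inner_comm u w]
  linear_combination (a * (inner ℝ u u : ℝ) + b * (inner ℝ w w : ℝ)) * hab

section CompConvex
variable {Hp Hv : Type*} [NormedAddCommGroup Hp] [InnerProductSpace ℝ Hp]
  [NormedAddCommGroup Hv] [InnerProductSpace ℝ Hv]

private lemma convexOn_opnorm_sq_sub_comp (T : Hp →L[ℝ] Hv) {c : ℝ} (hc : 0 ≤ c) (w : Hv) :
    ConvexOn ℝ Set.univ (fun v : Hp => c * ‖T‖ ^ 2 * ‖v‖ ^ 2 - c * ‖T v - w‖ ^ 2) := by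
  refine ⟨convex_univ, ?_⟩
  intro v₁ _ v₂ _ a b ha hb hab
  simp only [smul_eq_mul]
  have e1 : ‖a • v₁ + b • v₂‖ ^ 2
      = a * ‖v₁‖ ^ 2 + b * ‖v₂‖ ^ 2 - a * b * ‖v₁ - v₂‖ ^ 2 := norm_combo_sq' hab v₁ v₂
  have e0 : T (a • v₁ + b • v₂) - w = a • (T v₁ - w) + b • (T v₂ - w) := by
    have h' : a • (T v₁ - w) + b • (T v₂ - w) = a • T v₁ + b • T v₂ - (a + b) • w := by
      module
    rw [map_add, map_smul, map_smul, h', hab, one_smul]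
  have e2 : ‖T (a • v₁ + b • v₂) - w‖ ^ 2
      = a * ‖T v₁ - w‖ ^ 2 + b * ‖T v₂ - w‖ ^ 2 - a * b * ‖T (v₁ - v₂)‖ ^ 2 := by
    rw [e0, norm_combo_sq' hab]
    congr 3
    rw [map_sub]
    abel
  rw [e1, e2]
  have hTle : ‖T (v₁ - v₂)‖ ^ 2 ≤ ‖T‖ ^ 2 * ‖v₁ - v₂‖ ^ 2 := by
    have h := T.le_opNorm (v₁ - v₂)
    nlinarith [norm_nonneg (T (v₁ - v₂)), norm_nonneg (v₁ - v₂), norm_nonneg T]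
  nlinarith [mul_le_mul_of_nonneg_left hTle
    (mul_nonneg (mul_nonneg ha hb) hc)]

private lemma convexOn_inner_affine (μ : Hv) (T : Hp →L[ℝ] Hv) (w : Hv) :
    ConvexOn ℝ Set.univ (fun v : Hp => ⟪μ, T v - w⟫) := by
  refine ⟨convex_univ, ?_⟩
  intro v₁ _ v₂ _ a b ha hb hab
  simp only [smul_eq_mul]
  apply le_of_eq
  rw [map_add, map_smul, map_smul]
  simp only [inner_sub_right, inner_add_right, real_inner_smul_right]
  have : ⟪μ, w⟫ = a * ⟪μ, w⟫ + b * ⟪μ, w⟫ := by rw [← add_mul, hab, one_mul]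
  linarith [this]

end CompConvex

end AuxLemmas

/-- **Descent lemma for the smoothed augmented Lagrangian.**
With `(f, C)` being `(F, ζ)`-smooth with curvature constant `K` (encoded by the
differentiability of `f` and `F` on the open set `C₀ ⊇ C`, convexity of `F - f` on `C₀`,
and the bound `D_F(x + γ(s-x), x) ≤ K ζ(γ)`), `g ∈ Γ₀(H_v)`, `β > 0`, `ρ ≥ 0`, and
`L = ‖T‖²/β + ‖A‖² ρ`: for every `x, s ∈ C`, `γ ∈ (0,1]`, the point `x⁺ = x + γ(s - x)`
satisfies `E(x⁺) ≤ E(x) + ⟪∇ₓE(x), x⁺ - x⟫ + K ζ(γ) + (L/2)‖x⁺ - x‖²`. -/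
theorem smoothed_lagrangian_descent_lemma
    {Hp Hd Hv : Type*}
    [NormedAddCommGroup Hp] [InnerProductSpace ℝ Hp] [CompleteSpace Hp]
    [NormedAddCommGroup Hd] [InnerProductSpace ℝ Hd] [CompleteSpace Hd]
    [NormedAddCommGroup Hv] [InnerProductSpace ℝ Hv] [CompleteSpace Hv]
    (T : Hp →L[ℝ] Hv) (A : Hp →L[ℝ] Hd) (b μ : Hd)
    (β ρ : ℝ) (hβ : 0 < β) (hρ : 0 ≤ ρ)
    (g : Hv → EReal) (hg : IsProperConvexLsc g)
    (C C₀ : Set Hp) (hCconv : Convex ℝ C) (hCC₀ : C ⊆ C₀) (hC₀open : IsOpen C₀)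
    (f F : Hp → ℝ) (f' F' : Hp → Hp)
    (hf : ∀ x ∈ C₀, HasGradientAt f (f' x) x)
    (hF : ∀ x ∈ C₀, HasGradientAt F (F' x) x)
    (hFf : ConvexOn ℝ C₀ (fun x => F x - f x))
    (ζ : ℝ → ℝ) (hζ : ∀ γ : ℝ, 0 < γ → γ ≤ 1 → 0 ≤ ζ γ) (K : ℝ)
    (hK : ∀ x ∈ C, ∀ s ∈ C, ∀ γ : ℝ, 0 < γ → γ ≤ 1 →
      F (x + γ • (s - x)) - F x - ⟪F' x, (x + γ • (s - x)) - x⟫ ≤ K * ζ γ)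
    (E' : Hp → Hp)
    (hE' : ∀ x ∈ C, HasGradientAt (Efun f g β T A b μ ρ) (E' x) x) :
    ∀ x ∈ C, ∀ s ∈ C, ∀ γ : ℝ, 0 < γ → γ ≤ 1 →
      Efun f g β T A b μ ρ (x + γ • (s - x)) ≤
        Efun f g β T A b μ ρ x + ⟪E' x, (x + γ • (s - x)) - x⟫ + K * ζ γ +
          (‖T‖ ^ 2 / β + ‖A‖ ^ 2 * ρ) / 2 * ‖(x + γ • (s - x)) - x‖ ^ 2 := by
  intro x hx s hs γ hγ0 hγ1
  set L : ℝ := ‖T‖ ^ 2 / β + ‖A‖ ^ 2 * ρ with hL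
  set xp : Hp := x + γ • (s - x) with hxp
  have hd : xp - x = γ • (s - x) := by rw [hxp]; abel
  -- xp ∈ C
  have hxpC : xp ∈ C := hCconv.add_smul_sub_mem hx hs ⟨le_of_lt hγ0, hγ1⟩
  have hxC₀ : x ∈ C₀ := hCC₀ hx
  have hxpC₀ : xp ∈ C₀ := hCC₀ hxpC
  -- Part 1 : the (F,ζ)-smoothness estimate for f
  have hψgrad : HasGradientAt (fun v => F v - f v) (F' x - f' x) x :=
    (hF x hxC₀).sub'' (hf x hxC₀)
  have hψ := grad_ineq hFf hxC₀ hxpC₀ hψgrad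
  -- hψ : F x - f x + ⟪F' x - f' x, xp - x⟫ ≤ F xp - f xp
  have hKx := hK x hx s hs γ hγ0 hγ1
  have hinner_sub : ⟪F' x - f' x, xp - x⟫ = ⟪F' x, xp - x⟫ - ⟪f' x, xp - x⟫ :=
    inner_sub_left _ _ _
  have hfpart : f xp ≤ f x + ⟪f' x, xp - x⟫ + K * ζ γ := by
    rw [hinner_sub] at hψ
    have : F xp - F x - ⟪F' x, xp - x⟫ ≤ K * ζ γ := hKx
    linarith
  -- Part 2 : descent for the smooth part G = E - f
  set G : Hp → ℝ := fun v => Efun f g β T A b μ ρ v - f v with hG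
  set Φ : Hp → ℝ := fun v => L / 2 * ‖v‖ ^ 2 - G v with hΦ
  have hβ2 : (0:ℝ) < 2 * β := by linarith
  -- convexity of Φ
  have hΦconv : ConvexOn ℝ Set.univ Φ := by
    have h1 : ConvexOn ℝ Set.univ
        (fun v : Hp => (2 * β)⁻¹ * ‖T‖ ^ 2 * ‖v‖ ^ 2 - (2 * β)⁻¹ * ‖T v - 0‖ ^ 2) :=
      convexOn_opnorm_sq_sub_comp T (by positivity) 0
    have h2 : ConvexOn ℝ Set.univ
        (fun v : Hp => (2 * β)⁻¹ * ‖T v‖ ^ 2 - (moreauEnv g β (T v)).toReal) := by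
      have h0 := convexOn_sq_sub_moreau (H := Hv) hg hβ
      have := h0.comp_linearMap (T : Hp →ₗ[ℝ] Hv)
      exact this
    have h3 : ConvexOn ℝ Set.univ
        (fun v : Hp => ρ / 2 * ‖A‖ ^ 2 * ‖v‖ ^ 2 - ρ / 2 * ‖A v - b‖ ^ 2) :=
      convexOn_opnorm_sq_sub_comp A (by positivity) b
    have h4 : ConvexOn ℝ Set.univ (fun v : Hp => ⟪-μ, A v - b⟫) :=
      convexOn_inner_affine (-μ) A b
    have hsum := ((h1.add h2).add h3).add h4
    have heq : Φ = fun v : Hp =>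
        ((2 * β)⁻¹ * ‖T‖ ^ 2 * ‖v‖ ^ 2 - (2 * β)⁻¹ * ‖T v - 0‖ ^ 2
          + ((2 * β)⁻¹ * ‖T v‖ ^ 2 - (moreauEnv g β (T v)).toReal))
          + (ρ / 2 * ‖A‖ ^ 2 * ‖v‖ ^ 2 - ρ / 2 * ‖A v - b‖ ^ 2) + ⟪-μ, A v - b⟫ := by
      funext v
      simp only [hΦ, hG, Efun, sub_zero, inner_neg_left]
      rw [hL]
      field_simp
      ring
    rw [heq]
    exact hsum
  -- gradient of Φ at x
  have hGgrad : HasGradientAt G (E' x - f' x) x := (hE' x hx).sub'' (hf x hxC₀)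
  have hΦgrad : HasGradientAt Φ (L • x - (E' x - f' x)) x :=
    (hasGradientAt_const_mul_norm_sq L x).sub'' hGgrad
  have hΦineq := grad_ineq hΦconv (Set.mem_univ x) (Set.mem_univ xp) hΦgrad
  -- hΦineq : Φ x + ⟪L•x - (E' x - f' x), xp - x⟫ ≤ Φ xp
  have hnorm : ‖xp‖ ^ 2 = ‖x‖ ^ 2 + 2 * ⟪x, xp - x⟫ + ‖xp - x‖ ^ 2 := by
    have : xp = x + (xp - x) := by abel
    rw [this]
    rw [norm_add_sq_real]
    abel_nf
  have hinner1 : ⟪L • x - (E' x - f' x), xp - x⟫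
      = L * ⟪x, xp - x⟫ - (⟪E' x, xp - x⟫ - ⟪f' x, xp - x⟫) := by
    rw [inner_sub_left, inner_sub_left, real_inner_smul_left]
  have hGpart : G xp ≤ G x + (⟪E' x, xp - x⟫ - ⟪f' x, xp - x⟫) + L / 2 * ‖xp - x‖ ^ 2 := by
    have h5 : L / 2 * ‖x‖ ^ 2 - G x + (L * ⟪x, xp - x⟫ - (⟪E' x, xp - x⟫ - ⟪f' x, xp - x⟫))
        ≤ L / 2 * ‖xp‖ ^ 2 - G xp := by
      rw [← hinner1]
      exact hΦineq
    rw [hnorm] at h5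
    nlinarith [h5]
  -- assemble
  have hEdecomp : ∀ v : Hp, Efun f g β T A b μ ρ v = f v + G v := by
    intro v; simp [hG]
  rw [hEdecomp xp, hEdecomp x]
  have hfinal : f xp + G xp ≤ (f x + ⟪f' x, xp - x⟫ + K * ζ γ)
      + (G x + (⟪E' x, xp - x⟫ - ⟪f' x, xp - x⟫) + L / 2 * ‖xp - x‖ ^ 2) :=
    add_le_add hfpart hGpart
  calc f xp + G xp ≤ _ := hfinal
    _ = f x + G x + ⟪E' x, xp - x⟫ + K * ζ γ + L / 2 * ‖xp - x‖ ^ 2 := by ring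
end

section
/- Let H_p and H_d be real Hilbert spaces, A : H_p → H_d a bounded linear operator, and b ∈ H_d. Let C ⊆ H_p be contained in a ball of radius R centered at the origin and have diameter d := sup_{x,y∈C} ‖x − y‖. Let 0 ≤ ρ ≤ ρ' ≤ ρ̄ be real numbers. Then for any x, s ∈ C and any γ ∈ (0,1], the point x⁺ := x + γ(s − x) satisfies (ρ/2)‖Ax − b‖² − (ρ'/2)‖Ax⁺ − b‖² ≤ ρ̄ · d · ‖A‖ · (‖A‖R + ‖b‖) · γ. -/
open RealInnerProductSpace

/-- Let `A : H_p → H_d` be a bounded linear operator, `b ∈ H_d`, `C ⊆ H_p` contained in a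
ball of radius `R` about the origin and with diameter `≤ d`, and `0 ≤ ρ ≤ ρ' ≤ ρ̄`.
Then for `x, s ∈ C` and `γ ∈ (0,1]`, the point `x⁺ = x + γ(s - x)` satisfies
`(ρ/2)‖Ax - b‖² - (ρ'/2)‖Ax⁺ - b‖² ≤ ρ̄ d ‖A‖ (‖A‖R + ‖b‖) γ`. -/
theorem penalty_decrease_bound
    {Hp Hd : Type*}
    [NormedAddCommGroup Hp] [InnerProductSpace ℝ Hp] [CompleteSpace Hp]
    [NormedAddCommGroup Hd] [InnerProductSpace ℝ Hd] [CompleteSpace Hd]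
    (A : Hp →L[ℝ] Hd) (b : Hd) (C : Set Hp)
    (R : ℝ) (hR : ∀ x ∈ C, ‖x‖ ≤ R)
    (d : ℝ) (hd : ∀ x ∈ C, ∀ y ∈ C, ‖x - y‖ ≤ d)
    (ρ ρ' ρbar : ℝ) (h0 : 0 ≤ ρ) (h1 : ρ ≤ ρ') (h2 : ρ' ≤ ρbar) :
    ∀ x ∈ C, ∀ s ∈ C, ∀ γ : ℝ, 0 < γ → γ ≤ 1 →
      ρ / 2 * ‖A x - b‖ ^ 2 - ρ' / 2 * ‖A (x + γ • (s - x)) - b‖ ^ 2 ≤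
        ρbar * d * ‖A‖ * (‖A‖ * R + ‖b‖) * γ := by
  intro x hx s hs γ hγ hγ1
  have hrw : A (x + γ • (s - x)) - b = (A x - b) + γ • A (s - x) := by
    simp [map_add, map_smul]; abel
  rw [hrw]
  set u := A x - b with hu
  set v := A (s - x) with hv
  have hsq : ‖u + γ • v‖ ^ 2 = ‖u‖ ^ 2 + 2 * ⟪u, γ • v⟫ + ‖γ • v‖ ^ 2 := by
    rw [@norm_add_sq_real]
  have hinner : -(‖u‖ * ‖γ • v‖) ≤ ⟪u, γ • v⟫ := by
    have := abs_real_inner_le_norm u (γ • v)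
    linarith [neg_abs_le (⟪u, γ • v⟫)]
  have hgv : ‖γ • v‖ = γ * ‖v‖ := by
    rw [norm_smul, Real.norm_eq_abs, abs_of_pos hγ]
  have hub : ‖u‖ ≤ ‖A‖ * R + ‖b‖ := by
    calc ‖A x - b‖ ≤ ‖A x‖ + ‖b‖ := norm_sub_le _ _
      _ ≤ ‖A‖ * ‖x‖ + ‖b‖ := by linarith [A.le_opNorm x]
      _ ≤ ‖A‖ * R + ‖b‖ := by
          have := hR x hx
          nlinarith [norm_nonneg A, norm_nonneg x]
  have hvb : ‖v‖ ≤ ‖A‖ * d := by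
    calc ‖A (s - x)‖ ≤ ‖A‖ * ‖s - x‖ := A.le_opNorm _
      _ ≤ ‖A‖ * d := by
          have := hd s hs x hx
          nlinarith [norm_nonneg A, norm_nonneg (s - x)]
  have hR0 : (0:ℝ) ≤ R := le_trans (norm_nonneg _) (hR x hx)
  have hd0 : 0 ≤ d := le_trans (norm_nonneg _) (hd x hx x hx)
  have hA0 : (0:ℝ) ≤ ‖A‖ := norm_nonneg _
  have hu0 : (0:ℝ) ≤ ‖u‖ := norm_nonneg _
  have hv0 : (0:ℝ) ≤ ‖v‖ := norm_nonneg _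
  have hX0 : (0:ℝ) ≤ ‖A‖ * R + ‖b‖ := by nlinarith [norm_nonneg b]
  have key : ‖u‖ ^ 2 - ‖u + γ • v‖ ^ 2 ≤ 2 * γ * (‖u‖ * ‖v‖) := by
    rw [hsq, hgv]
    nlinarith [sq_nonneg (γ * ‖v‖), hinner, hgv]
  have hρ'0 : (0:ℝ) ≤ ρ' := h0.trans h1
  have hρbar0 : (0:ℝ) ≤ ρbar := hρ'0.trans h2
  have huv : ‖u‖ * ‖v‖ ≤ (‖A‖ * R + ‖b‖) * (‖A‖ * d) := mul_le_mul hub hvb hv0 hX0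
  have step1 : ρ / 2 * ‖u‖ ^ 2 - ρ' / 2 * ‖u + γ • v‖ ^ 2 ≤
      ρ' / 2 * (‖u‖ ^ 2 - ‖u + γ • v‖ ^ 2) := by nlinarith [sq_nonneg ‖u‖]
  have step2 : ρ' / 2 * (‖u‖ ^ 2 - ‖u + γ • v‖ ^ 2) ≤ ρ' / 2 * (2 * γ * (‖u‖ * ‖v‖)) := by
    apply mul_le_mul_of_nonneg_left key (by linarith)
  have step3 : ρ' / 2 * (2 * γ * (‖u‖ * ‖v‖)) ≤ ρbar * d * ‖A‖ * (‖A‖ * R + ‖b‖) * γ := by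
    calc ρ' / 2 * (2 * γ * (‖u‖ * ‖v‖)) = ρ' * γ * (‖u‖ * ‖v‖) := by ring
      _ ≤ ρ' * γ * ((‖A‖ * R + ‖b‖) * (‖A‖ * d)) :=
          mul_le_mul_of_nonneg_left huv (mul_nonneg hρ'0 hγ.le)
      _ ≤ ρbar * γ * ((‖A‖ * R + ‖b‖) * (‖A‖ * d)) :=
          mul_le_mul_of_nonneg_right (mul_le_mul_of_nonneg_right h2 hγ.le)
            (mul_nonneg hX0 (mul_nonneg hA0 hd0))
      _ = ρbar * d * ‖A‖ * (‖A‖ * R + ‖b‖) * γ := by ring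
  linarith
end
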